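/- arXiv:2503.15281 — 4 statements merged into one kernel-verified Lean document; each statement's English description precedes it below -/
import Mathlib

section
/- For the 2×2 Hermitian matrix-valued function G(x) = P(x) · diag(2+sin(πx), 2−sin(πx)) · P(x)*, where P(x) = (e^{iπx}, −e^{iπx}; 1, 1), G is 1-periodic (G(x+1)=G(x)) and invertible for every real x, but there is no continuous 1-periodic map U: R → U(2) such that U(x)* G(x) U(x) is diagonal for all x. -/
open Matrix Complex Real

/-- The matrix `P(x) = (e^{iπx}, -e^{iπx}; 1, 1)`. -/
noncomputable def Pmat (x : ℝ) : Matrix (Fin 2) (Fin 2) ℂ :=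
  !![Complex.exp (Real.pi * x * Complex.I), -Complex.exp (Real.pi * x * Complex.I);
     1, 1]

/-- `G(x) = P(x) · diag(2 + sin(πx), 2 − sin(πx)) · P(x)*`. -/
noncomputable def Gmat (x : ℝ) : Matrix (Fin 2) (Fin 2) ℂ :=
  Pmat x * Matrix.diagonal ![(2 + Real.sin (Real.pi * x) : ℂ),
    (2 - Real.sin (Real.pi * x) : ℂ)] * (Pmat x)ᴴ

lemma exp_mul_exp_neg_pi (x : ℝ) :
    Complex.exp (Real.pi * x * Complex.I) * Complex.exp (-(Real.pi * x * Complex.I)) = 1 := by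
  rw [← Complex.exp_add]; simp

lemma conj_exp_pi (x : ℝ) :
    (starRingEnd ℂ) (Complex.exp (Real.pi * x * Complex.I)) =
      Complex.exp (-(Real.pi * x * Complex.I)) := by
  rw [← Complex.exp_conj]; congr 1; simp

lemma conj_exp_pi' (x : ℝ) :
    (starRingEnd ℂ) (Complex.exp (-(Real.pi * x * Complex.I))) =
      Complex.exp (Real.pi * x * Complex.I) := by
  rw [← Complex.exp_conj]; congr 1; simp

lemma csin_eq (x : ℝ) :
    Complex.sin ((Real.pi : ℂ) * (x : ℂ)) = ((Real.sin (Real.pi * x) : ℝ) : ℂ) := by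
  rw [show ((Real.pi : ℂ) * (x : ℂ)) = ((Real.pi * x : ℝ) : ℂ) by push_cast; ring]
  exact (Complex.ofReal_sin _).symm

lemma conj_sin_pi (x : ℝ) :
    (starRingEnd ℂ) (Complex.sin ((Real.pi : ℂ) * (x : ℂ))) =
      Complex.sin ((Real.pi : ℂ) * (x : ℂ)) := by
  rw [csin_eq, Complex.conj_ofReal]

lemma Gmat_eq (x : ℝ) : Gmat x =
    !![4, 2 * Real.sin (Real.pi * x) * Complex.exp (Real.pi * x * Complex.I);
       2 * Real.sin (Real.pi * x) * Complex.exp (-(Real.pi * x * Complex.I)), 4] := by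
  have h1 := exp_mul_exp_neg_pi x
  ext i j
  fin_cases i <;> fin_cases j <;>
    · simp [Gmat, Pmat, Matrix.mul_apply, Matrix.mul_diagonal, Matrix.vecMul_diagonal,
        Fin.sum_univ_two, Matrix.conjTranspose_apply, conj_exp_pi]
      first
        | linear_combination (4 : ℂ) * h1
        | linear_combination (-4 : ℂ) * h1
        | ring

lemma exp_pi_succ (x : ℝ) :
    Complex.exp (Real.pi * (x + 1 : ℝ) * Complex.I) = -Complex.exp (Real.pi * x * Complex.I) := by
  rw [show ((Real.pi : ℂ) * ((x : ℝ) + 1 : ℝ) * Complex.I)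
      = Real.pi * x * Complex.I + Real.pi * Complex.I by push_cast; ring,
    Complex.exp_add, Complex.exp_pi_mul_I]
  ring

lemma exp_neg_pi_succ (x : ℝ) :
    Complex.exp (-(Real.pi * (x + 1 : ℝ) * Complex.I)) =
      -Complex.exp (-(Real.pi * x * Complex.I)) := by
  rw [show (-((Real.pi : ℂ) * ((x : ℝ) + 1 : ℝ) * Complex.I))
      = -(Real.pi * x * Complex.I) + -(Real.pi * Complex.I) by push_cast; ring,
    Complex.exp_add, show Complex.exp (-(Real.pi * Complex.I)) = -1 by
      rw [Complex.exp_neg, Complex.exp_pi_mul_I]; norm_num]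
  ring

lemma sin_pi_succ (x : ℝ) : Real.sin (Real.pi * (x + 1)) = -Real.sin (Real.pi * x) := by
  rw [show Real.pi * (x + 1) = Real.pi * x + Real.pi by ring, Real.sin_add_pi]

lemma sin_pi_ne (y : ℝ) (h0 : 0 < y) (h2 : y < 2) (h1 : y ≠ 1) :
    Real.sin (Real.pi * y) ≠ 0 := by
  rcases lt_or_gt_of_ne h1 with hlt | hgt
  · exact ne_of_gt (Real.sin_pos_of_pos_of_lt_pi (by positivity)
      (by nlinarith [Real.pi_pos]))
  · have h : Real.sin (Real.pi * y) = -Real.sin (Real.pi * (y - 1)) := by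
      rw [show Real.pi * y = Real.pi * (y - 1) + Real.pi by ring, Real.sin_add_pi]
    rw [h, neg_ne_zero]
    exact ne_of_gt (Real.sin_pos_of_pos_of_lt_pi (by nlinarith [Real.pi_pos])
      (by nlinarith [Real.pi_pos]))

lemma Gmat_herm (x : ℝ) : (Gmat x)ᴴ = Gmat x := by
  rw [Gmat_eq]
  ext i j
  fin_cases i <;> fin_cases j <;>
    simp [Matrix.conjTranspose_apply, conj_exp_pi, conj_exp_pi', conj_sin_pi,
      Complex.conj_ofReal]

/-- `G` is 1-periodic and invertible for every real `x`, but there is no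
continuous 1-periodic family of unitaries `U` diagonalizing `G` by
`U(x)* G(x) U(x)`. -/
theorem no_periodic_unitary_diagonalization :
    (∀ x : ℝ, Gmat (x + 1) = Gmat x) ∧
    (∀ x : ℝ, IsUnit (Gmat x)) ∧
    ¬ ∃ U : ℝ → Matrix (Fin 2) (Fin 2) ℂ,
        Continuous U ∧
        (∀ x : ℝ, U (x + 1) = U x) ∧
        (∀ x : ℝ, U x ∈ Matrix.unitaryGroup (Fin 2) ℂ) ∧
        (∀ x : ℝ, ((U x)ᴴ * Gmat x * U x).IsDiag) := by
  refine ⟨?_, ?_, ?_⟩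
  · -- periodicity
    intro x
    rw [Gmat_eq, Gmat_eq, sin_pi_succ, exp_pi_succ, exp_neg_pi_succ]
    ext i j
    fin_cases i <;> fin_cases j <;>
      · simp
        try push_cast
        try ring
  · -- invertibility
    intro x
    rw [Matrix.isUnit_iff_isUnit_det, isUnit_iff_ne_zero, Gmat_eq, Matrix.det_fin_two_of]
    have hd : (4 : ℂ) * 4 -
        (2 * Real.sin (Real.pi * x) * Complex.exp (Real.pi * x * Complex.I)) *
          (2 * Real.sin (Real.pi * x) * Complex.exp (-(Real.pi * x * Complex.I)))
        = ((16 - 4 * Real.sin (Real.pi * x) ^ 2 : ℝ) : ℂ) := by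
      push_cast
      linear_combination (-4 * (Complex.sin ((Real.pi : ℂ) * (x : ℂ))) ^ 2) *
        exp_mul_exp_neg_pi x
    rw [hd, Complex.ofReal_ne_zero]
    nlinarith [Real.sin_sq_le_one (Real.pi * x)]
  · -- non-existence
    rintro ⟨U, hUc, hUp, hUu, hUd⟩
    set h : ℝ → ℂ := fun x =>
      U x 0 0 * (starRingEnd ℂ) (U x 1 0) * Complex.exp (-(Real.pi * x * Complex.I)) with hh
    have hcont : Continuous h := by
      apply Continuous.mul
      · exact (hUc.matrix_elem 0 0).mul ((continuous_star).comp (hUc.matrix_elem 1 0))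
      · exact Complex.continuous_exp.comp (by fun_prop)
    have hsq : ∀ x : ℝ, Real.sin (Real.pi * x) ≠ 0 → (h x) ^ 2 = 1 / 4 := by
      intro x hs
      have hee := exp_mul_exp_neg_pi x
      have hsC : ((Real.sin (Real.pi * x) : ℝ) : ℂ) ≠ 0 := Complex.ofReal_ne_zero.mpr hs
      set e : ℂ := Complex.exp (Real.pi * x * Complex.I) with he_def
      set e' : ℂ := Complex.exp (-(Real.pi * x * Complex.I)) with he'_def
      set s : ℂ := ((Real.sin (Real.pi * x) : ℝ) : ℂ) with hs_def
      set u1 : ℂ := U x 0 0 with hu1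
      set u2 : ℂ := U x 1 0 with hu2
      set v1 : ℂ := (starRingEnd ℂ) u1 with hv1
      set v2 : ℂ := (starRingEnd ℂ) u2 with hv2
      set M : Matrix (Fin 2) (Fin 2) ℂ := (U x)ᴴ * Gmat x * U x with hM
      have hM10 : M 1 0 = 0 := hUd x (by decide)
      have hU1 : U x * (U x)ᴴ = 1 := by
        have h2 := (hUu x).2
        rwa [Matrix.star_eq_conjTranspose] at h2
      have hU2 : (U x)ᴴ * U x = 1 := by
        have h2 := (hUu x).1
        rwa [Matrix.star_eq_conjTranspose] at h2
      have hGU : Gmat x * U x = U x * M := by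
        rw [hM, ← Matrix.mul_assoc, ← Matrix.mul_assoc, hU1, Matrix.one_mul]
      rw [Gmat_eq x] at hGU
      have h00 := congrFun (congrFun hGU 0) 0
      have h10 := congrFun (congrFun hGU 1) 0
      simp only [Matrix.mul_apply, Fin.sum_univ_two, Matrix.of_apply, Matrix.cons_val',
        Matrix.cons_val_zero, Matrix.cons_val_one, Matrix.head_cons, Matrix.empty_val',
        Matrix.cons_val_fin_one, Matrix.head_fin_const] at h00 h10
      rw [hM10] at h00 h10
      rw [mul_zero, add_zero] at h00 h10
      set d : ℂ := M 0 0 with hd_def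
      -- conjugate symmetry of d
      have hMH : Mᴴ = M := by
        rw [hM, Matrix.conjTranspose_mul, Matrix.conjTranspose_mul,
          Matrix.conjTranspose_conjTranspose, Gmat_herm, Matrix.mul_assoc]
      have hdR : (starRingEnd ℂ) d = d := by
        have h3 := congrFun (congrFun hMH 0) 0
        simpa [Matrix.conjTranspose_apply] using h3
      have hA : 2 * s * e * u2 = (d - 4) * u1 := by linear_combination h00
      have hB : 2 * s * e' * u1 = (d - 4) * u2 := by linear_combination h10
      have hA2 : 2 * s * e' * v2 = (d - 4) * v1 := by
        have h4 := congrArg (starRingEnd ℂ) hA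
        simp only [_root_.map_mul, map_sub, map_ofNat, Complex.conj_ofReal, hs_def, he_def,
          conj_exp_pi, hdR] at h4
        linear_combination h4
      have hB2 : 2 * s * e * v1 = (d - 4) * v2 := by
        have h4 := congrArg (starRingEnd ℂ) hB
        simp only [_root_.map_mul, map_sub, map_ofNat, Complex.conj_ofReal, hs_def, he'_def,
          conj_exp_pi', hdR] at h4
        linear_combination h4
      have hn : v1 * u1 + v2 * u2 = 1 := by
        have h5 := congrFun (congrFun hU2 0) 0
        simpa [Matrix.mul_apply, Fin.sum_univ_two, Matrix.conjTranspose_apply, Matrix.one_apply,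
          hv1, hv2, hu1, hu2] using h5
      set t : ℂ := d - 4 with ht_def
      have e1 : ((2 * s * e') * u1) * ((2 * s * e) * v1) = (t * u2) * (t * v2) := by
        rw [hB, hB2]
      have e2 : ((2 * s * e) * u2) * ((2 * s * e') * v2) = (t * u1) * (t * v1) := by
        rw [hA, hA2]
      have hK : (2 * s * e) * (2 * s * e') = t * t := by
        linear_combination e1 + e2 + (t * t - (2 * s * e) * (2 * s * e')) * hn
      have ht2 : t * t = 4 * s ^ 2 := by
        linear_combination (-1 : ℂ) * hK + 4 * s ^ 2 * hee
      have h4s : (4 : ℂ) * s ^ 2 ≠ 0 := by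
        simp [pow_eq_zero_iff, hsC]
      have htne : t ≠ 0 := by
        intro h6
        rw [h6, mul_zero] at ht2
        exact h4s ht2.symm
      have h5 : t * t * (u2 * v2) = t * t * (u1 * v1) := by
        linear_combination e2 + (-(u2 * v2)) * hK
      have hpq : u2 * v2 = u1 * v1 := mul_left_cancel₀ (mul_ne_zero htne htne) h5
      have hq : u2 * v2 = 1 / 2 := by
        linear_combination (1 / 2 : ℂ) * hn + (1 / 2 : ℂ) * hpq
      have hr : (2 * s * e') * (u1 * v2) = t / 2 := by
        linear_combination v2 * hB + t * hq
      have hr2 : ((2 * s * e') * (u1 * v2)) ^ 2 = (t / 2) ^ 2 := by rw [hr]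
      have key : (4 * s ^ 2) * ((u1 * v2 * e') ^ 2) = (4 * s ^ 2) * (1 / 4) := by
        linear_combination hr2 + (1 / 4 : ℂ) * ht2
      have hfin := mul_left_cancel₀ h4s key
      simpa [hh] using hfin
    have hper : ∀ x : ℝ, h (x + 1) = -h x := by
      intro x
      simp only [hh]
      rw [hUp x, exp_neg_pi_succ]
      ring
    -- (h 1)^2 = 1/4 by continuity
    have h1sq : (h 1) ^ 2 = 1 / 4 := by
      have hcw : Filter.Tendsto (fun y => (h y) ^ 2) (nhdsWithin 1 {(1 : ℝ)}ᶜ)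
          (nhds ((h 1) ^ 2)) :=
        ((hcont.pow 2).continuousAt).continuousWithinAt
      have hev : ∀ᶠ y in nhdsWithin 1 {(1 : ℝ)}ᶜ, (h y) ^ 2 = 1 / 4 := by
        have hball : Set.Ioo (0 : ℝ) 2 ∈ nhds (1 : ℝ) := Ioo_mem_nhds (by norm_num) (by norm_num)
        filter_upwards [nhdsWithin_le_nhds hball, self_mem_nhdsWithin] with y hy hy1
        exact hsq y (sin_pi_ne y hy.1 hy.2 hy1)
      have hcw2 : Filter.Tendsto (fun y => (h y) ^ 2) (nhdsWithin 1 {(1 : ℝ)}ᶜ)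
          (nhds (1 / 4)) :=
        Filter.Tendsto.congr' (Filter.EventuallyEq.symm hev) tendsto_const_nhds
      exact tendsto_nhds_unique hcw hcw2
    have hval : ∀ y : ℝ, y ∈ Set.Icc (1 / 2 : ℝ) (3 / 2) → (h y) ^ 2 = 1 / 4 := by
      intro y hy
      by_cases hy1 : y = 1
      · rw [hy1]; exact h1sq
      · exact hsq y (sin_pi_ne y (by linarith [hy.1]) (by linarith [hy.2]) hy1)
    -- real parts
    set f : ℝ → ℝ := fun y => (h y).re with hf
    have hfc : Continuous f := Complex.continuous_re.comp hcont
    have hfval : ∀ y : ℝ, y ∈ Set.Icc (1 / 2 : ℝ) (3 / 2) → f y = 1 / 2 ∨ f y = -(1 / 2) := by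
      intro y hy
      have h6 := hval y hy
      have h7 : (h y - 1 / 2) * (h y + 1 / 2) = 0 := by linear_combination h6
      rcases mul_eq_zero.mp h7 with h8 | h8
      · left
        have h9 : h y = 1 / 2 := by linear_combination h8
        rw [hf]; simp [h9]
      · right
        have h9 : h y = -(1 / 2) := by linear_combination h8
        rw [hf]; simp [h9]
    have hf32 : f (3 / 2) = -f (1 / 2) := by
      have h6 : ((3 : ℝ) / 2) = 1 / 2 + 1 := by norm_num
      rw [hf]
      simp only
      rw [h6, hper (1 / 2)]
      simp
    have hmem : (0 : ℝ) ∈ Set.uIcc (f (1 / 2)) (f (3 / 2)) := by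
      rw [hf32]
      rcases le_or_gt 0 (f (1 / 2)) with h9 | h9
      · exact Set.mem_uIcc.mpr (Or.inr ⟨by linarith, h9⟩)
      · exact Set.mem_uIcc.mpr (Or.inl ⟨by linarith, by linarith⟩)
    have hIcc : Set.uIcc (1 / 2 : ℝ) (3 / 2) = Set.Icc (1 / 2 : ℝ) (3 / 2) :=
      Set.uIcc_of_le (by norm_num)
    have hiv := intermediate_value_uIcc (f := f) (a := (1 / 2 : ℝ)) (b := (3 / 2 : ℝ))
      (hfc.continuousOn)
    obtain ⟨x0, hx0, hfx0⟩ := hiv hmem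
    rw [hIcc] at hx0
    rcases hfval x0 hx0 with h9 | h9 <;> rw [hfx0] at h9 <;> norm_num at h9
end

section
/- Let ζ: R → C \ {0} be continuous and 1-periodic with ζ(x)·ζ(x+1/2) = 1 for all x. Then there exists a continuous 1-periodic function ξ: R → C \ {0} such that ξ(x)·ξ(x+1/2)^{-1} = −ζ(x) for all x. Moreover, if ζ is real-analytic then ξ may be chosen real-analytic. -/
open Complex

/-! Lifting `ζ` through the covering map `exp : ℂ → ℂ \ {0}` gives a continuous logarithm `G`.
Then `G x + G (x + 1/2)` is continuous with values in `2πiℤ`, hence a constant `2πiK`; comparing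
it at `x` and `x + 1/2` shows that `G` is `1`-periodic. Now `ξ x = exp (G x / 2 - 2πi(K+1)x)` is
`1`-periodic and `ξ x / ξ (x + 1/2) = exp (G x + πi) = -ζ x`. Near any `x₀`, `G` differs from
`log (ζ / ζ x₀)` by a constant, so `G`, and with it `ξ`, is analytic when `ζ` is. -/

theorem exists_continuous_exp_eq {A : Type*} [TopologicalSpace A] [SimplyConnectedSpace A]
    [LocallyPathConnectedSpace A] {f : A → ℂ} (hf : Continuous f) (hf₀ : ∀ a, f a ≠ 0) :
    ∃ G : A → ℂ, Continuous G ∧ ∀ a, exp (G a) = f a := by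
  obtain ⟨a₀⟩ : Nonempty A := inferInstance
  obtain ⟨G, ⟨-, hG⟩, -⟩ := isCoveringMapOn_exp.existsUnique_continuousMap_lifts ⟨f, hf⟩
    (exp_log (hf₀ a₀)) hf₀
  exact ⟨G, G.continuous, congrFun hG⟩

theorem exists_int_forall_eq_of_exp_eq_one {A : Type*} [TopologicalSpace A] [PreconnectedSpace A]
    [Nonempty A] {F : A → ℂ} (hF : Continuous F) (h : ∀ a, exp (F a) = 1) :
    ∃ K : ℤ, ∀ a, F a = K * (2 * Real.pi * I) := by
  obtain ⟨a₀⟩ : Nonempty A := inferInstance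
  obtain ⟨K, hK⟩ := exp_eq_one_iff.mp (h a₀)
  refine ⟨K, fun a => hK ▸ isCoveringMap_exp.const_of_comp hF (fun a a' => ?_) a a₀⟩
  ext; simp [h]

theorem analyticAt_of_exp_eq {E : Type*} [NormedAddCommGroup E] [NormedSpace ℝ E]
    {G f : E → ℂ} {x₀ : E} (hG : ContinuousAt G x₀) (hexp : ∀ x, exp (G x) = f x)
    (hf : AnalyticAt ℝ f x₀) : AnalyticAt ℝ G x₀ := by
  have hf₀ : f x₀ ≠ 0 := hexp x₀ ▸ exp_ne_zero _
  have hlog : AnalyticAt ℝ (fun x => G x₀ + log (f x / f x₀)) x₀ := by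
    have : AnalyticAt ℂ log (f x₀ / f x₀) := analyticAt_clog (by simp [div_self hf₀])
    exact analyticAt_const.add
      ((this.restrictScalars (𝕜 := ℝ)).comp (f := (f · / f x₀)) hf.div_const)
  refine hlog.congr ?_
  have him : ContinuousAt (fun x => (G x - G x₀).im) x₀ :=
    continuous_im.continuousAt.comp (hG.sub continuousAt_const)
  filter_upwards [him.eventually_mem (Ioo_mem_nhds (a := -Real.pi) (b := Real.pi)
    (by simp [Real.pi_pos]) (by simp [Real.pi_pos]))] with x hx
  rw [← hexp, ← hexp, ← exp_sub, log_exp hx.1 hx.2.le, add_sub_cancel]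

theorem exists_periodic_squareroot_twist_general (ζ : ℝ → ℂ)
    (hc : Continuous ζ) (hnz : ∀ x, ζ x ≠ 0)
    (hrel : ∀ x, ζ x * ζ (x + 1/2) = 1) :
    (∃ ξ : ℝ → ℂ, Continuous ξ ∧ (∀ x, ξ (x + 1) = ξ x) ∧ (∀ x, ξ x ≠ 0) ∧
      (∀ x, ξ x * (ξ (x + 1/2))⁻¹ = -ζ x)) ∧
    (AnalyticOnNhd ℝ ζ Set.univ →
      ∃ ξ : ℝ → ℂ, AnalyticOnNhd ℝ ξ Set.univ ∧ Continuous ξ ∧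
        (∀ x, ξ (x + 1) = ξ x) ∧ (∀ x, ξ x ≠ 0) ∧
        (∀ x, ξ x * (ξ (x + 1/2))⁻¹ = -ζ x)) := by
  obtain ⟨G, hGc, hGexp⟩ := exists_continuous_exp_eq hc hnz
  obtain ⟨K, hK⟩ := exists_int_forall_eq_of_exp_eq_one (F := fun x => G x + G (x + 1/2))
    (by fun_prop) fun x => by rw [exp_add, hGexp, hGexp, hrel]
  have hGper : ∀ x, G (x + 1) = G x := fun x => by
    have := hK (x + 1/2)
    rw [add_assoc, add_halves] at this
    linear_combination this - hK x
  let ξ : ℝ → ℂ := fun x => exp (G x / 2 - (K + 1) * (2 * Real.pi * I) * x)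
  have hξc : Continuous ξ := by fun_prop
  have hξper : ∀ x, ξ (x + 1) = ξ x := fun x => exp_eq_exp_iff_exists_int.mpr
    ⟨-(K + 1), by push_cast; linear_combination hGper x / 2⟩
  have hξrel : ∀ x, ξ x * (ξ (x + 1/2))⁻¹ = -ζ x := fun x => by
    rw [← hGexp, ← exp_neg, ← exp_add, neg_eq_neg_one_mul (exp _),
      ← exp_pi_mul_I, ← exp_add]
    congr 1
    push_cast
    linear_combination -hK x / 2
  refine ⟨⟨ξ, hξc, hξper, fun _ => exp_ne_zero _, hξrel⟩,
    fun hA => ⟨ξ, fun x _ => ?_, hξc, hξper, fun _ => exp_ne_zero _, hξrel⟩⟩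
  have hGa : AnalyticAt ℝ G x := analyticAt_of_exp_eq hGc.continuousAt hGexp (hA x trivial)
  exact analyticAt_cexp.restrictScalars.comp
    (f := fun y : ℝ => G y / 2 - (K + 1) * (2 * Real.pi * I) * y)
    ((hGa.div_const).sub (analyticAt_const.mul (ofRealCLM.analyticAt x)))

/-- Given a continuous 1-periodic nonvanishing `ζ : ℝ → ℂ` with
`ζ(x)·ζ(x+1/2) = 1`, there is a continuous 1-periodic nonvanishing `ξ : ℝ → ℂ`
with `ξ(x)·ξ(x+1/2)⁻¹ = −ζ(x)`; moreover, if `ζ` is real-analytic then `ξ` can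
be chosen real-analytic. -/
theorem exists_periodic_squareroot_twist (ζ : ℝ → ℂ)
    (hc : Continuous ζ) (hnz : ∀ x, ζ x ≠ 0)
    (hper : ∀ x, ζ (x + 1) = ζ x)
    (hrel : ∀ x, ζ x * ζ (x + 1/2) = 1) :
    (∃ ξ : ℝ → ℂ, Continuous ξ ∧ (∀ x, ξ (x + 1) = ξ x) ∧ (∀ x, ξ x ≠ 0) ∧
      (∀ x, ξ x * (ξ (x + 1/2))⁻¹ = -ζ x)) ∧
    (AnalyticOnNhd ℝ ζ Set.univ →
      ∃ ξ : ℝ → ℂ, AnalyticOnNhd ℝ ξ Set.univ ∧ Continuous ξ ∧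
        (∀ x, ξ (x + 1) = ξ x) ∧ (∀ x, ξ x ≠ 0) ∧
        (∀ x, ξ x * (ξ (x + 1/2))⁻¹ = -ζ x)) :=
  exists_periodic_squareroot_twist_general ζ hc hnz hrel
end

section
/- Let α be irrational and let s₁, s₂, s₃, s₄: T → R be continuous functions on the circle and d a nonzero real number satisfying: s₁(x+α) − s₁(x) = d·s₃(x), s₂(x+α) − s₂(x) = d·s₄(x) − d·s₁(x+α), s₃(x+α) = s₃(x), and s₄(x+α) − s₄(x) = −d·s₃(x+α), for all x. Then s₃ ≡ 0, s₁ and s₄ are constants, and s₁ = s₄. Consequently the matrix S(x) = (s₁(x) s₂(x); s₃(x) s₄(x)) satisfies det S(x) = s₁² ≥ 0 for all x. -/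
open AddSubgroup in
/-- A continuous function on `ℝ` invariant under `x ↦ x + 1` and `x ↦ x + α`
with `α` irrational is constant. -/
lemma const_of_invariant (α : ℝ) (hα : Irrational α) (f : ℝ → ℝ) (hf : Continuous f)
    (hp : ∀ x, f (x + 1) = f x) (he : ∀ x, f (x + α) = f x) : ∀ x, f x = f 0 := by
  set H : AddSubgroup ℝ :=
    { carrier := {g | ∀ x, f (x + g) = f x}
      zero_mem' := by intro x; simp
      add_mem' := by
        intro a b ha hb x
        rw [← add_assoc, hb, ha]
      neg_mem' := by
        intro a ha x
        have := ha (x + -a)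
        rw [add_assoc, neg_add_cancel, add_zero] at this
        exact this.symm } with hH
  have hHclosed : IsClosed (H : Set ℝ) := by
    have : (H : Set ℝ) = ⋂ x : ℝ, {g | f (x + g) = f x} := by
      ext g; simp [hH, Set.mem_iInter]
    rw [this]
    exact isClosed_iInter fun x =>
      isClosed_eq (hf.comp (continuous_const.add continuous_id)) continuous_const
  have h1 : (1 : ℝ) ∈ H := hp
  have hαH : α ∈ H := he
  have hdense : Dense (H : Set ℝ) := by
    rcases H.dense_or_cyclic with h | ⟨a, ha⟩
    · exact h
    · exfalso
      rw [ha] at h1 hαH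
      rw [AddSubgroup.mem_closure_singleton] at h1 hαH
      obtain ⟨m, hm⟩ := h1
      obtain ⟨n, hn⟩ := hαH
      have hm0 : (m : ℝ) ≠ 0 := by
        intro h
        rw [zsmul_eq_mul, h, zero_mul] at hm
        exact one_ne_zero hm.symm
      have hα2 : α = (n : ℝ) / (m : ℝ) := by
        rw [zsmul_eq_mul] at hm hn
        rw [eq_div_iff hm0, ← hn, mul_assoc, mul_comm a ((m:ℝ)), hm, mul_one]
      have : ((↑((n : ℚ) / (m : ℚ)) : ℝ)) = α := by
        push_cast
        rw [hα2]
      exact hα ⟨(n : ℚ) / (m : ℚ), this⟩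
  have hall : ∀ g : ℝ, g ∈ H := by
    have : (H : Set ℝ) = Set.univ := hHclosed.closure_eq ▸ hdense.closure_eq
    intro g
    have hg : g ∈ (H : Set ℝ) := this ▸ Set.mem_univ g
    exact hg
  intro x
  have := hall x 0
  rwa [zero_add] at this

/-- A continuous 1-periodic function on `ℝ` is bounded. -/
lemma bound_of_periodic (f : ℝ → ℝ) (hf : Continuous f) (hp : ∀ x, f (x + 1) = f x) :
    ∃ M : ℝ, ∀ x, |f x| ≤ M := by
  obtain ⟨M, hM⟩ := (isCompact_Icc (a := (0:ℝ)) (b := 1)).exists_bound_of_continuousOn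
    (hf.norm.continuousOn)
  refine ⟨M, fun x => ?_⟩
  have hper : Function.Periodic f 1 := hp
  have hfx : f x = f (Int.fract x) := by
    have h := hper.sub_int_mul_eq (x := x) (n := ⌊x⌋)
    rw [mul_one] at h
    rw [Int.fract]
    exact h.symm
  rw [hfx]
  have := hM (Int.fract x) ⟨(Int.fract_nonneg x), (Int.fract_lt_one x).le⟩
  simpa using this

/-- If `f` is continuous, 1-periodic and `f (x + α) - f x = c` for all `x`, then `c = 0`. -/
lemma cob_zero (α : ℝ) (f : ℝ → ℝ) (hf : Continuous f) (hp : ∀ x, f (x + 1) = f x)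
    (c : ℝ) (he : ∀ x, f (x + α) - f x = c) : c = 0 := by
  obtain ⟨M, hM⟩ := bound_of_periodic f hf hp
  have key : ∀ n : ℕ, f (n * α) = f 0 + n * c := by
    intro n
    induction n with
    | zero => simp
    | succ n ih =>
      have := he (n * α)
      push_cast
      have h2 : ((n : ℝ) + 1) * α = n * α + α := by ring
      rw [h2]
      have : f (n * α + α) = f (n * α) + c := by linarith [he (n * α)]
      rw [this, ih]; ring
  by_contra hc
  obtain ⟨n, hn⟩ := exists_nat_gt ((|f 0| + M) / |c|)
  have hc0 : 0 < |c| := abs_pos.mpr hc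
  have h1 : |f 0| + M < n * |c| := by
    rwa [div_lt_iff₀ hc0] at hn
  have h2 : |f ((n : ℕ) * α)| ≤ M := hM _
  have h3 : (n : ℝ) * |c| = |(n : ℝ) * c| := by
    rw [abs_mul, abs_of_nonneg (by positivity : (0:ℝ) ≤ (n:ℝ))]
  have h4 : |(n : ℝ) * c| ≤ |f ((n:ℕ) * α)| + |f 0| := by
    have := key n
    have : (n : ℝ) * c = f ((n:ℕ) * α) - f 0 := by rw [this]; ring
    rw [this]
    exact abs_sub _ _
  linarith

/-- Let `α` be irrational and `s₁, s₂, s₃, s₄ : 𝕋 → ℝ` continuous (viewed as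
continuous 1-periodic functions on `ℝ`) satisfying the cohomological system
`s₁(x+α) − s₁(x) = d·s₃(x)`, `s₂(x+α) − s₂(x) = d·s₄(x) − d·s₁(x+α)`,
`s₃(x+α) = s₃(x)`, `s₄(x+α) − s₄(x) = −d·s₃(x+α)` with `d ≠ 0`. Then `s₃ ≡ 0`,
`s₁` and `s₄` are equal constants, and `det (s₁ s₂; s₃ s₄) = s₁² ≥ 0`. -/
theorem cohomological_system_forces_nonneg_det
    (α d : ℝ) (hα : Irrational α) (hd : d ≠ 0)
    (s₁ s₂ s₃ s₄ : ℝ → ℝ)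
    (hc₁ : Continuous s₁) (hc₂ : Continuous s₂)
    (hc₃ : Continuous s₃) (hc₄ : Continuous s₄)
    (hp₁ : ∀ x, s₁ (x + 1) = s₁ x) (hp₂ : ∀ x, s₂ (x + 1) = s₂ x)
    (hp₃ : ∀ x, s₃ (x + 1) = s₃ x) (hp₄ : ∀ x, s₄ (x + 1) = s₄ x)
    (he₁ : ∀ x, s₁ (x + α) - s₁ x = d * s₃ x)
    (he₂ : ∀ x, s₂ (x + α) - s₂ x = d * s₄ x - d * s₁ (x + α))
    (he₃ : ∀ x, s₃ (x + α) = s₃ x)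
    (he₄ : ∀ x, s₄ (x + α) - s₄ x = -d * s₃ (x + α)) :
    (∀ x, s₃ x = 0) ∧
    (∃ c : ℝ, (∀ x, s₁ x = c) ∧ (∀ x, s₄ x = c)) ∧
    (∀ x, s₁ x * s₄ x - s₂ x * s₃ x = (s₁ x) ^ 2) ∧
    (∀ x, 0 ≤ s₁ x * s₄ x - s₂ x * s₃ x) := by
  -- s₃ is constant
  have hs₃const : ∀ x, s₃ x = s₃ 0 := const_of_invariant α hα s₃ hc₃ hp₃ he₃
  -- s₃ 0 = 0 via coboundary on s₁
  have hds₃ : d * s₃ 0 = 0 := by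
    apply cob_zero α s₁ hc₁ hp₁
    intro x
    rw [he₁ x, hs₃const x]
  have hs₃0 : s₃ 0 = 0 := by
    rcases mul_eq_zero.mp hds₃ with h | h
    · exact absurd h hd
    · exact h
  have hs₃zero : ∀ x, s₃ x = 0 := fun x => (hs₃const x).trans hs₃0
  -- s₁ constant
  have hs₁const : ∀ x, s₁ x = s₁ 0 := by
    apply const_of_invariant α hα s₁ hc₁ hp₁
    intro x
    have := he₁ x
    rw [hs₃zero x] at this
    linarith
  -- s₄ constant
  have hs₄const : ∀ x, s₄ x = s₄ 0 := by
    apply const_of_invariant α hα s₄ hc₄ hp₄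
    intro x
    have := he₄ x
    rw [hs₃zero (x + α)] at this
    linarith
  -- s₄ 0 = s₁ 0 via coboundary on s₂
  have heq : d * s₄ 0 - d * s₁ 0 = 0 := by
    apply cob_zero α s₂ hc₂ hp₂
    intro x
    rw [he₂ x, hs₄const x, hs₁const (x + α)]
  have h14 : s₄ 0 = s₁ 0 := by
    have : d * (s₄ 0 - s₁ 0) = 0 := by linarith
    rcases mul_eq_zero.mp this with h | h
    · exact absurd h hd
    · linarith
  refine ⟨hs₃zero, ⟨s₁ 0, hs₁const, fun x => (hs₄const x).trans h14⟩, ?_, ?_⟩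
  · intro x
    rw [hs₃zero x, hs₁const x, hs₄const x, h14]
    ring
  · intro x
    rw [hs₃zero x, hs₁const x, hs₄const x, h14]
    nlinarith [sq_nonneg (s₁ 0)]
end

section
/- Let f: T × R → R be continuous with f(x, t+1) = f(x,t), and suppose there is an integer K with f(x,t) + f(x+1/2, 1/2−t) = K for all (x,t). Define the skew-product F̃(x,t) = (x+α, t + f(x,t)) and Birkhoff sums ψ_N(x,t) = Σ_{n=0}^{N−1} f(F̃ⁿ(x,t)). Then ψ_N(x,t) + ψ_N(x+1/2, 1/2−t) = N·K for all N ≥ 1 and all (x,t). Consequently, if the fibered rotation number ρ = lim_{N→∞} ψ_N(x,t)/N exists and is independent of (x,t), then 2ρ = K, i.e., 2ρ ≡ 0 (mod 1). -/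
/-!
Write `σ(x,t) = (x + c, s - t)`. By the symmetry `f + f ∘ σ = K`, the skew product
`F(x,t) = (x + α, t + f(x,t))` commutes with `σ` up to an integer translation in the fibre:
`Fⁿ(σ p) = σ(Fⁿ p) + (0, nK)`. Since `f` is 1-periodic in `t`, the translation is invisible to `f`,
so the `n`-th terms of the two Birkhoff sums add up to `K`, whence `ψ_N + ψ_N ∘ σ = NK`.
Dividing by `N` and letting `N → ∞` gives `ρ + ρ = K`.
-/

open Filter Topology

/-- Birkhoff sums of `f` along the skew product `F̃(x,t) = (x+α, t+f(x,t))`. -/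
noncomputable def skewBirkhoffSum (α : ℝ) (f : ℝ → ℝ → ℝ) (N : ℕ) (x t : ℝ) : ℝ :=
  ∑ n ∈ Finset.range N,
    f (((fun p : ℝ × ℝ => (p.1 + α, p.2 + f p.1 p.2))^[n] (x, t)).1)
      (((fun p : ℝ × ℝ => (p.1 + α, p.2 + f p.1 p.2))^[n] (x, t)).2)

def skewProduct (α : ℝ) (f : ℝ → ℝ → ℝ) (p : ℝ × ℝ) : ℝ × ℝ :=
  (p.1 + α, p.2 + f p.1 p.2)

theorem skewBirkhoffSum_eq_sum_iterate (α : ℝ) (f : ℝ → ℝ → ℝ) (N : ℕ) (x t : ℝ) :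
    skewBirkhoffSum α f N x t =
      ∑ n ∈ Finset.range N, Function.uncurry f ((skewProduct α f)^[n] (x, t)) :=
  rfl

section Reflection

variable {α c s : ℝ} {f : ℝ → ℝ → ℝ} {K : ℤ}

theorem apply_add_int_of_periodic (hpert : ∀ x t, f x (t + 1) = f x t) (x t : ℝ) (m : ℤ) :
    f x (t + m) = f x t := by
  simpa using (show Function.Periodic (f x) 1 from hpert x).int_mul m t

theorem apply_reflect_add_int (hpert : ∀ x t, f x (t + 1) = f x t)
    (hsym : ∀ x t, f x t + f (x + c) (s - t) = K) (x t : ℝ) (m : ℤ) :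
    f (x + c) (s - t + m) = K - f x t := by
  rw [apply_add_int_of_periodic hpert]
  linarith [hsym x t]

theorem skewProduct_iterate_reflect (hpert : ∀ x t, f x (t + 1) = f x t)
    (hsym : ∀ x t, f x t + f (x + c) (s - t) = K) (n : ℕ) (p : ℝ × ℝ) :
    (skewProduct α f)^[n] (p.1 + c, s - p.2) =
      (((skewProduct α f)^[n] p).1 + c, s - ((skewProduct α f)^[n] p).2 + n * K) := by
  induction n with
  | zero => simp
  | succ n ih =>
    rw [Function.iterate_succ_apply', Function.iterate_succ_apply', ih]
    set q := (skewProduct α f)^[n] p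
    have hf : f (q.1 + c) (s - q.2 + n * K) = K - f q.1 q.2 :=
      mod_cast apply_reflect_add_int hpert hsym q.1 q.2 (n * K)
    simp only [skewProduct, hf, Prod.mk.injEq]
    push_cast
    constructor <;> ring

theorem skewBirkhoffSum_add_reflect (hpert : ∀ x t, f x (t + 1) = f x t)
    (hsym : ∀ x t, f x t + f (x + c) (s - t) = K) (N : ℕ) (x t : ℝ) :
    skewBirkhoffSum α f N x t + skewBirkhoffSum α f N (x + c) (s - t) = N * K := by
  have hterm : ∀ n ∈ Finset.range N,
      Function.uncurry f ((skewProduct α f)^[n] (x, t)) +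
        Function.uncurry f ((skewProduct α f)^[n] (x + c, s - t)) = K := by
    intro n _
    rw [skewProduct_iterate_reflect (p := (x, t)) hpert hsym n]
    have := apply_reflect_add_int hpert hsym ((skewProduct α f)^[n] (x, t)).1
      ((skewProduct α f)^[n] (x, t)).2 (n * K)
    push_cast at this
    simp only [Function.uncurry, this]
    ring
  rw [skewBirkhoffSum_eq_sum_iterate, skewBirkhoffSum_eq_sum_iterate, ← Finset.sum_add_distrib,
    Finset.sum_congr rfl hterm]
  simp

end Reflection

theorem add_eq_of_tendsto_div_of_add_eq_mul {a b : ℕ → ℝ} {ρ ρ' K : ℝ}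
    (hab : ∀ N, a N + b N = N * K) (ha : Tendsto (fun N => a N / N) atTop (𝓝 ρ))
    (hb : Tendsto (fun N => b N / N) atTop (𝓝 ρ')) : ρ + ρ' = K := by
  have hK : ∀ᶠ N : ℕ in atTop, a N / N + b N / N = K := by
    filter_upwards [eventually_gt_atTop 0] with N hN
    rw [← add_div, hab, mul_div_cancel_left₀ _ (Nat.cast_ne_zero.mpr hN.ne')]
  exact tendsto_nhds_unique ((ha.add hb).congr' hK) tendsto_const_nhds

theorem birkhoff_symmetry_and_rotation_number_general (α : ℝ) (f : ℝ → ℝ → ℝ) (K : ℤ)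
    (hpert : ∀ x t, f x (t + 1) = f x t)
    (hsym : ∀ x t, f x t + f (x + 1/2) (1/2 - t) = K) :
    (∀ N : ℕ, 1 ≤ N → ∀ x t,
      skewBirkhoffSum α f N x t + skewBirkhoffSum α f N (x + 1/2) (1/2 - t) = N * K) ∧
    (∀ ρ : ℝ,
      (∀ x t, Tendsto (fun N : ℕ => skewBirkhoffSum α f N x t / N) atTop (nhds ρ)) →
      2 * ρ = K) := by
  refine ⟨fun N _ x t => skewBirkhoffSum_add_reflect hpert hsym N x t, fun ρ hρ => ?_⟩
  have := add_eq_of_tendsto_div_of_add_eq_mul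
    (fun N => skewBirkhoffSum_add_reflect (α := α) hpert hsym N 0 0)
    (hρ 0 0) (hρ (0 + 1/2) (1/2 - 0))
  linarith

/-- If `f : 𝕋 × ℝ → ℝ` is continuous, 1-periodic in both variables, and
satisfies `f(x,t) + f(x+1/2, 1/2−t) = K` for an integer `K`, then the Birkhoff
sums along `F̃(x,t) = (x+α, t+f(x,t))` satisfy
`ψ_N(x,t) + ψ_N(x+1/2, 1/2−t) = N·K`; consequently, if the fibered rotation
number `ρ = lim ψ_N/N` exists independently of `(x,t)`, then `2ρ = K`, i.e.
`2ρ ≡ 0 (mod 1)`. -/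
theorem birkhoff_symmetry_and_rotation_number (α : ℝ) (f : ℝ → ℝ → ℝ) (K : ℤ)
    (hc : Continuous (Function.uncurry f))
    (hperx : ∀ x t, f (x + 1) t = f x t)
    (hpert : ∀ x t, f x (t + 1) = f x t)
    (hsym : ∀ x t, f x t + f (x + 1/2) (1/2 - t) = K) :
    (∀ N : ℕ, 1 ≤ N → ∀ x t,
      skewBirkhoffSum α f N x t + skewBirkhoffSum α f N (x + 1/2) (1/2 - t) = N * K) ∧
    (∀ ρ : ℝ,
      (∀ x t, Tendsto (fun N : ℕ => skewBirkhoffSum α f N x t / N) atTop (nhds ρ)) →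
      2 * ρ = K) :=
  birkhoff_symmetry_and_rotation_number_general α f K hpert hsym
end
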